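/- Suppose A is a right H-comodule algebra with B = A^{co H}, γ : H → A is convolution-invertible with γ(1) = 1, ψ(γ(h)) = Σ γ(h₍₁₎) ⊗ h₍₂₎. Define α'(h ⊗ b) = Σ γ(h₍₁₎) b γ⁻¹(h₍₂₎) for b ∈ B. Then α'(h ⊗ b) ∈ B for all h ∈ H, b ∈ B, and the induced map α : H ⊗ B → B is a weak action of H on B. -/
import Mathlib


open TensorProduct LinearMap

noncomputable section

namespace CrossedGalois

/-- Convolution product of two linear maps from a coalgebra to an algebra. -/
def conv (k : Type) [Field k] {C B : Type} [AddCommGroup C] [Module k C] [Coalgebra k C]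
    [Ring B] [Algebra k B] (f g : C →ₗ[k] B) : C →ₗ[k] B :=
  (LinearMap.mul' k B) ∘ₗ (TensorProduct.map f g) ∘ₗ (Coalgebra.comul (R := k))

/-- The unit `η ∘ ε` for the convolution product. -/
def convOne (k : Type) [Field k] (C B : Type) [AddCommGroup C] [Module k C] [Coalgebra k C]
    [Ring B] [Algebra k B] : C →ₗ[k] B :=
  (Algebra.linearMap k B) ∘ₗ (Coalgebra.counit (R := k))

/-- Convolution invertibility. -/
def ConvInvertible (k : Type) [Field k] {C B : Type} [AddCommGroup C] [Module k C]
    [Coalgebra k C] [Ring B] [Algebra k B] (f : C →ₗ[k] B) : Prop :=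
  ∃ g : C →ₗ[k] B, conv k f g = convOne k C B ∧ conv k g f = convOne k C B

variable (k : Type) [Field k]

section CrossedProduct

variable (B H : Type) [Ring B] [Algebra k B] [Ring H] [Bialgebra k H]

/-- `h ↦ α (h ⊗ b)`. -/
def actOn (α : H ⊗[k] B →ₗ[k] B) (b : B) : H →ₗ[k] B :=
  α ∘ₗ ((TensorProduct.mk k H B).flip b)

/-- `α` is a weak action of the bialgebra `H` on the algebra `B` :
`h · (ab) = Σ (h₁ · a)(h₂ · b)` and `h · 1 = ε(h) 1`. -/
structure IsWeakAction (α : H ⊗[k] B →ₗ[k] B) : Prop where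
  smul_mul : ∀ (h : H) (a b : B),
    α (h ⊗ₜ (a * b)) =
      LinearMap.mul' k B ((TensorProduct.map α α)
        ((TensorProduct.tensorTensorTensorComm k H H B B)
          ((Coalgebra.comul (R := k) h) ⊗ₜ (a ⊗ₜ b))))
  smul_one : ∀ h : H, α (h ⊗ₜ (1 : B)) = (Coalgebra.counit (R := k) h) • (1 : B)

/-- The 2-cocycle condition
`Σ (h₁ · σ(g₁,l₁)) σ(h₂, g₂l₂) = Σ σ(h₁,g₁) σ(h₂g₂, l)`
together with the normalisation `σ(h,1) = σ(1,h) = ε(h)1`. -/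
structure IsCocycle (α : H ⊗[k] B →ₗ[k] B) (σ : H ⊗[k] H →ₗ[k] B) : Prop where
  cocycle :
    conv k (α ∘ₗ lTensor H σ) (σ ∘ₗ lTensor H (LinearMap.mul' k H)) =
    conv k (σ ∘ₗ lTensor H ((TensorProduct.rid k H).toLinearMap ∘ₗ
              lTensor H (Coalgebra.counit (R := k))))
           (σ ∘ₗ (rTensor H (LinearMap.mul' k H)) ∘ₗ
              (TensorProduct.assoc k H H H).symm.toLinearMap)
  norm_right : ∀ h : H, σ (h ⊗ₜ (1 : H)) = (Coalgebra.counit (R := k) h) • (1 : B)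
  norm_left : ∀ h : H, σ ((1 : H) ⊗ₜ h) = (Coalgebra.counit (R := k) h) • (1 : B)

/-- `B` is a twisted `H`-module:  `1 · b = b` and
`Σ (h₁ · (g₁ · b)) σ(h₂,g₂) = Σ σ(h₁,g₁) ((h₂g₂) · b)`. -/
structure IsTwistedModule (α : H ⊗[k] B →ₗ[k] B) (σ : H ⊗[k] H →ₗ[k] B) : Prop where
  one_smul : ∀ b : B, α ((1 : H) ⊗ₜ b) = b
  twisted : ∀ b : B,
    conv k (α ∘ₗ lTensor H (actOn k B H α b)) σ =
    conv k σ ((actOn k B H α b) ∘ₗ LinearMap.mul' k H)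

/-- The multiplication of the crossed product `B #_σ H`:
`(a # h)(b # g) = Σ a (h₁·b) σ(h₂,g₁) # h₃g₂`. -/
def cpMul (α : H ⊗[k] B →ₗ[k] B) (σ : H ⊗[k] H →ₗ[k] B) :
    (B ⊗[k] H) ⊗[k] (B ⊗[k] H) →ₗ[k] B ⊗[k] H :=
  (rTensor H (LinearMap.mul' k B)) ∘ₗ
  (TensorProduct.assoc k B B H).symm.toLinearMap ∘ₗ
  (lTensor B
    ((rTensor H (LinearMap.mul' k B)) ∘ₗ
     (TensorProduct.assoc k B B H).symm.toLinearMap ∘ₗ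
     (TensorProduct.map α (TensorProduct.map σ (LinearMap.mul' k H))) ∘ₗ
     (lTensor (H ⊗[k] B) (TensorProduct.tensorTensorTensorComm k H H H H).toLinearMap) ∘ₗ
     (TensorProduct.tensorTensorTensorComm k H (H ⊗[k] H) B (H ⊗[k] H)).toLinearMap ∘ₗ
     (TensorProduct.map ((lTensor H (Coalgebra.comul (R := k))) ∘ₗ (Coalgebra.comul (R := k)))
       (lTensor B (Coalgebra.comul (R := k)))))) ∘ₗ
  (TensorProduct.assoc k B H (B ⊗[k] H)).toLinearMap

/-- The unit `1 # 1` of the crossed product. -/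
def cpOne : B ⊗[k] H := (1 : B) ⊗ₜ (1 : H)

/-- The crossed product multiplication is associative with unit `1 ⊗ 1`. -/
def IsCpAlgebra (α : H ⊗[k] B →ₗ[k] B) (σ : H ⊗[k] H →ₗ[k] B) : Prop :=
  (∀ x y z : B ⊗[k] H,
      cpMul k B H α σ ((cpMul k B H α σ (x ⊗ₜ y)) ⊗ₜ z) =
      cpMul k B H α σ (x ⊗ₜ (cpMul k B H α σ (y ⊗ₜ z)))) ∧
  (∀ x : B ⊗[k] H, cpMul k B H α σ ((cpOne k B H) ⊗ₜ x) = x) ∧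
  (∀ x : B ⊗[k] H, cpMul k B H α σ (x ⊗ₜ (cpOne k B H)) = x)

/-- The right `H`-coaction `id_B ⊗ Δ` on `B ⊗ H`. -/
def cpCoact : B ⊗[k] H →ₗ[k] (B ⊗[k] H) ⊗[k] H :=
  (TensorProduct.assoc k B H H).symm.toLinearMap ∘ₗ lTensor B (Coalgebra.comul (R := k))

end CrossedProduct

section Galois

variable (H : Type) [Ring H] [Bialgebra k H]

/-- The submodule of `A ⊗ A` spanned by `xb ⊗ y - x ⊗ by` for `b` in a given subset `S`,
with respect to a given multiplication map `M`; its quotient is `A ⊗_B A`. -/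
def midRel {A : Type} [AddCommGroup A] [Module k A]
    (M : A ⊗[k] A →ₗ[k] A) (S : Set A) : Submodule k (A ⊗[k] A) :=
  Submodule.span k {z | ∃ x y b, b ∈ S ∧
    z = (M (x ⊗ₜ b)) ⊗ₜ y - x ⊗ₜ (M (b ⊗ₜ y))}

/-- The map `can' : A ⊗ A → A ⊗ H`, `x ⊗ y ↦ Σ x y₍₀₎ ⊗ y₍₁₎`. -/
def canMap {A : Type} [AddCommGroup A] [Module k A]
    (M : A ⊗[k] A →ₗ[k] A) (ρ : A →ₗ[k] A ⊗[k] H) : A ⊗[k] A →ₗ[k] A ⊗[k] H :=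
  (rTensor H M) ∘ₗ (TensorProduct.assoc k A A H).symm.toLinearMap ∘ₗ (lTensor A ρ)

/-- The extension is `H`-Galois: the canonical map descends to a bijection
`A ⊗_B A → A ⊗ H`. -/
def IsGalois {A : Type} [AddCommGroup A] [Module k A]
    (M : A ⊗[k] A →ₗ[k] A) (ρ : A →ₗ[k] A ⊗[k] H) (S : Set A) : Prop :=
  ∃ can : ((A ⊗[k] A) ⧸ midRel k M S) →ₗ[k] A ⊗[k] H,
    can ∘ₗ (midRel k M S).mkQ = canMap k H M ρ ∧ Function.Bijective can

/-- `A` is a right `H`-comodule algebra. -/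
structure IsComodAlg {A : Type} [Ring A] [Algebra k A]
    (ρ : A →ₗ[k] A ⊗[k] H) : Prop where
  coassoc : ∀ a : A, (rTensor H ρ) (ρ a) =
    (TensorProduct.assoc k A H H).symm ((lTensor A (Coalgebra.comul (R := k))) (ρ a))
  counit_id : ∀ a : A,
    (TensorProduct.rid k A) ((lTensor A (Coalgebra.counit (R := k))) (ρ a)) = a
  mul : ∀ a b : A, ρ (a * b) = ρ a * ρ b
  one : ρ 1 = 1

end Galois

end CrossedGalois

namespace CrossedGalois

/-- `h ⊗ a ↦ Σ γ(h₁) a μ(h₂)`. -/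
def actL (k A H : Type) [Field k] [Ring A] [Algebra k A] [Ring H] [Bialgebra k H]
    (γ μ : H →ₗ[k] A) : H ⊗[k] A →ₗ[k] A :=
  (LinearMap.mul' k A) ∘ₗ (lTensor A (LinearMap.mul' k A)) ∘ₗ
  (TensorProduct.map γ (lTensor A μ)) ∘ₗ
  (lTensor H (TensorProduct.comm k H A).toLinearMap) ∘ₗ
  (TensorProduct.assoc k H H A).toLinearMap ∘ₗ
  (rTensor A (Coalgebra.comul (R := k)))

/-- `σ(h,g) = Σ γ(h₁) γ(g₁) μ(h₂ g₂)`. -/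
def sigMap (k A H : Type) [Field k] [Ring A] [Algebra k A] [Ring H] [Bialgebra k H]
    (γ μ : H →ₗ[k] A) : H ⊗[k] H →ₗ[k] A :=
  conv k ((LinearMap.mul' k A) ∘ₗ TensorProduct.map γ γ) (μ ∘ₗ LinearMap.mul' k H)

/-- `ω(h,g) = Σ γ(h₁ g₁) μ(g₂) μ(h₂)`. -/
def omgMap (k A H : Type) [Field k] [Ring A] [Algebra k A] [Ring H] [Bialgebra k H]
    (γ μ : H →ₗ[k] A) : H ⊗[k] H →ₗ[k] A :=
  conv k (γ ∘ₗ LinearMap.mul' k H)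
    ((LinearMap.mul' k A) ∘ₗ (TensorProduct.map μ μ) ∘ₗ (TensorProduct.comm k H H).toLinearMap)

end CrossedGalois

namespace CrossedGalois

section ConvTools
variable {k : Type} [Field k] {C : Type} [AddCommGroup C] [Module k C] [Coalgebra k C]
variable {R : Type} [Ring R] [Algebra k R] {R' : Type} [Ring R'] [Algebra k R']

lemma convOne_apply (c : C) :
    convOne k C R c = (Coalgebra.counit (R := k) c) • (1 : R) := by
  simp [convOne, Algebra.algebraMap_eq_smul_one]

lemma conv_assoc (f g e : C →ₗ[k] R) :
    conv k (conv k f g) e = conv k f (conv k g e) := by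
  have hmapl : TensorProduct.map (conv k f g) e =
      (TensorProduct.map (LinearMap.mul' k R ∘ₗ TensorProduct.map f g) e) ∘ₗ
        (Coalgebra.comul (R := k)).rTensor C := by
    apply TensorProduct.ext'
    intro x y
    simp [conv]
  have hmapr : TensorProduct.map f (conv k g e) =
      (TensorProduct.map f (LinearMap.mul' k R ∘ₗ TensorProduct.map g e)) ∘ₗ
        (Coalgebra.comul (R := k)).lTensor C := by
    apply TensorProduct.ext'
    intro x y
    simp [conv]
  have hL : (LinearMap.mul' k R ∘ₗ
        TensorProduct.map (LinearMap.mul' k R ∘ₗ TensorProduct.map f g) e) =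
      (LinearMap.mul' k R ∘ₗ
        TensorProduct.map f (LinearMap.mul' k R ∘ₗ TensorProduct.map g e)) ∘ₗ
        (TensorProduct.assoc k C C C).toLinearMap := by
    apply TensorProduct.ext_threefold
    intro x y z
    simp [mul_assoc]
  have hco : (TensorProduct.assoc k C C C).toLinearMap ∘ₗ
      (Coalgebra.comul (R := k)).rTensor C ∘ₗ Coalgebra.comul =
      (Coalgebra.comul (R := k)).lTensor C ∘ₗ Coalgebra.comul := Coalgebra.coassoc
  calc conv k (conv k f g) e
      = LinearMap.mul' k R ∘ₗ TensorProduct.map (conv k f g) e ∘ₗ Coalgebra.comul := rfl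
    _ = LinearMap.mul' k R ∘ₗ TensorProduct.map f (conv k g e) ∘ₗ Coalgebra.comul := by
        rw [hmapl, hmapr]
        simp only [LinearMap.comp_assoc]
        rw [← hco]
        simp only [← LinearMap.comp_assoc]
        rw [hL]
    _ = conv k f (conv k g e) := rfl

lemma one_conv (f : C →ₗ[k] R) : conv k (convOne k C R) f = f := by
  have h : TensorProduct.map (convOne k C R) f =
      (TensorProduct.map (Algebra.linearMap k R) f) ∘ₗ (Coalgebra.counit (R := k)).rTensor C := by
    apply TensorProduct.ext'; intro x y; simp [convOne]
  have : conv k (convOne k C R) f =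
      (LinearMap.mul' k R ∘ₗ TensorProduct.map (Algebra.linearMap k R) f) ∘ₗ
        ((Coalgebra.counit (R := k)).rTensor C ∘ₗ Coalgebra.comul) := by
    rw [conv, h]; simp only [LinearMap.comp_assoc]
  rw [this, Coalgebra.rTensor_counit_comp_comul]
  ext c
  simp [Algebra.algebraMap_eq_smul_one]

lemma conv_one (f : C →ₗ[k] R) : conv k f (convOne k C R) = f := by
  have h : TensorProduct.map f (convOne k C R) =
      (TensorProduct.map f (Algebra.linearMap k R)) ∘ₗ (Coalgebra.counit (R := k)).lTensor C := by
    apply TensorProduct.ext'; intro x y; simp [convOne]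
  have : conv k f (convOne k C R) =
      (LinearMap.mul' k R ∘ₗ TensorProduct.map f (Algebra.linearMap k R)) ∘ₗ
        ((Coalgebra.counit (R := k)).lTensor C ∘ₗ Coalgebra.comul) := by
    rw [conv, h]; simp only [LinearMap.comp_assoc]
  rw [this, Coalgebra.lTensor_counit_comp_comul]
  ext c
  simp [Algebra.algebraMap_eq_smul_one]

lemma conv_mulLeft (x : R) (f g : C →ₗ[k] R) :
    conv k (LinearMap.mulLeft k x ∘ₗ f) g = LinearMap.mulLeft k x ∘ₗ conv k f g := by
  have h : LinearMap.mul' k R ∘ₗ TensorProduct.map (LinearMap.mulLeft k x ∘ₗ f) g =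
      (LinearMap.mulLeft k x ∘ₗ LinearMap.mul' k R) ∘ₗ TensorProduct.map f g := by
    apply TensorProduct.ext'; intro u v; simp [mul_assoc]
  rw [conv, conv]
  simp only [← LinearMap.comp_assoc]
  rw [h]

lemma conv_mulRight (x : R) (f g : C →ₗ[k] R) :
    conv k f (LinearMap.mulRight k x ∘ₗ g) = LinearMap.mulRight k x ∘ₗ conv k f g := by
  have h : LinearMap.mul' k R ∘ₗ TensorProduct.map f (LinearMap.mulRight k x ∘ₗ g) =
      (LinearMap.mulRight k x ∘ₗ LinearMap.mul' k R) ∘ₗ TensorProduct.map f g := by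
    apply TensorProduct.ext'; intro u v; simp [mul_assoc]
  rw [conv, conv]
  simp only [← LinearMap.comp_assoc]
  rw [h]

lemma comp_conv (φ : R →ₗ[k] R') (hφ : ∀ x y : R, φ (x * y) = φ x * φ y)
    (f g : C →ₗ[k] R) : φ ∘ₗ conv k f g = conv k (φ ∘ₗ f) (φ ∘ₗ g) := by
  have h1 : φ ∘ₗ LinearMap.mul' k R = LinearMap.mul' k R' ∘ₗ TensorProduct.map φ φ := by
    apply TensorProduct.ext'; intro u v; simp [hφ]
  have h2 : TensorProduct.map φ φ ∘ₗ TensorProduct.map f g =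
      TensorProduct.map (φ ∘ₗ f) (φ ∘ₗ g) := by
    rw [← TensorProduct.map_comp]
  rw [conv, conv]
  simp only [← LinearMap.comp_assoc]
  rw [h1]
  simp only [LinearMap.comp_assoc, ← h2]

lemma comp_convOne (φ : R →ₗ[k] R') (hφ : φ 1 = 1) :
    φ ∘ₗ convOne k C R = convOne k C R' := by
  ext c
  simp [convOne_apply, map_smul, hφ]

lemma conv_inv_unique {f g g' : C →ₗ[k] R}
    (h1 : conv k f g = convOne k C R) (h2 : conv k g' f = convOne k C R) : g' = g := by
  have := conv_assoc g' f g
  rw [h2, h1, one_conv, conv_one] at this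
  exact this.symm

lemma mulRight_convOne (x : R) :
    LinearMap.mulRight k x ∘ₗ convOne k C R = LinearMap.mulLeft k x ∘ₗ convOne k C R := by
  ext c
  simp [convOne_apply, smul_mul_assoc, mul_smul_comm]

end ConvTools

section GaloisTools

variable {k A H : Type} [Field k] [Ring A] [Algebra k A] [Ring H] [Bialgebra k H]

lemma actL_flip (γ μ : H →ₗ[k] A) (b : A) :
    actL k A H γ μ ∘ₗ ((TensorProduct.mk k H A).flip b) =
      conv k γ (LinearMap.mulLeft k b ∘ₗ μ) := by
  have key : ((LinearMap.mul' k A) ∘ₗ (lTensor A (LinearMap.mul' k A)) ∘ₗ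
      (TensorProduct.map γ (lTensor A μ)) ∘ₗ
      (lTensor H (TensorProduct.comm k H A).toLinearMap) ∘ₗ
      (TensorProduct.assoc k H H A).toLinearMap) ∘ₗ
      ((TensorProduct.mk k (H ⊗[k] H) A).flip b) =
      LinearMap.mul' k A ∘ₗ TensorProduct.map γ (LinearMap.mulLeft k b ∘ₗ μ) := by
    apply TensorProduct.ext'
    intro g l
    simp [mul_assoc]
  ext h
  have h2 := LinearMap.congr_fun key (Coalgebra.comul (R := k) h)
  simpa [actL, conv] using h2

end GaloisTools


end CrossedGalois

namespace CrossedGalois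

/-- `α'(h ⊗ b) = Σ γ(h₁) b γ⁻¹(h₂)` lands in `B = A^{co H}` and induces
a weak action of `H` on `B`. -/
theorem induced_weak_action (k A H : Type) [Field k] [Ring A] [Algebra k A] [Ring H] [HopfAlgebra k H]
    (ρ : A →ₗ[k] A ⊗[k] H) (hA : IsComodAlg k H ρ)
    (S : Subalgebra k A) (hS : ∀ a : A, a ∈ S ↔ ρ a = a ⊗ₜ (1 : H))
    (γ μ : H →ₗ[k] A)
    (hγcolin : ∀ h : H, ρ (γ h) = (rTensor H γ) (Coalgebra.comul (R := k) h))
    (hγone : γ (1 : H) = 1)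
    (hconv : conv k γ μ = convOne k H A ∧ conv k μ γ = convOne k H A) :
    (∀ (h : H) (b : A), b ∈ S → actL k A H γ μ (h ⊗ₜ b) ∈ S) ∧
    (∀ (h : H) (a b : A), a ∈ S → b ∈ S →
      actL k A H γ μ (h ⊗ₜ (a * b)) =
        LinearMap.mul' k A ((TensorProduct.map (actL k A H γ μ) (actL k A H γ μ))
          ((TensorProduct.tensorTensorTensorComm k H H A A)
            ((Coalgebra.comul (R := k) h) ⊗ₜ (a ⊗ₜ b))))) ∧
    (∀ h : H, actL k A H γ μ (h ⊗ₜ (1 : A)) =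
      (Coalgebra.counit (R := k) h) • (1 : A)) := by
  obtain ⟨hγμ, hμγ⟩ := hconv
  -- Part 3 : h · 1 = ε(h) 1
  have part3 : ∀ h : H, actL k A H γ μ (h ⊗ₜ (1 : A)) =
      (Coalgebra.counit (R := k) h) • (1 : A) := by
    intro h
    have h1 := actL_flip γ μ (1 : A)
    rw [show LinearMap.mulLeft k (1 : A) ∘ₗ μ = μ by ext x; simp, hγμ] at h1
    have h2 := LinearMap.congr_fun h1 h
    simpa [convOne_apply] using h2
  -- Part 2 : weak action multiplicativity
  have part2 : ∀ (h : H) (a b : A),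
      actL k A H γ μ (h ⊗ₜ (a * b)) =
        LinearMap.mul' k A ((TensorProduct.map (actL k A H γ μ) (actL k A H γ μ))
          ((TensorProduct.tensorTensorTensorComm k H H A A)
            ((Coalgebra.comul (R := k) h) ⊗ₜ (a ⊗ₜ b)))) := by
    intro h a b
    have key2 : (LinearMap.mul' k A ∘ₗ
        TensorProduct.map (actL k A H γ μ) (actL k A H γ μ) ∘ₗ
        (TensorProduct.tensorTensorTensorComm k H H A A).toLinearMap) ∘ₗ
        ((TensorProduct.mk k (H ⊗[k] H) (A ⊗[k] A)).flip (a ⊗ₜ b)) =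
        LinearMap.mul' k A ∘ₗ TensorProduct.map
          (actL k A H γ μ ∘ₗ (TensorProduct.mk k H A).flip a)
          (actL k A H γ μ ∘ₗ (TensorProduct.mk k H A).flip b) := by
      apply TensorProduct.ext'
      intro g l
      simp
    have hconvrhs : conv k (conv k γ (LinearMap.mulLeft k a ∘ₗ μ))
        (conv k γ (LinearMap.mulLeft k b ∘ₗ μ)) =
        conv k γ (LinearMap.mulLeft k (a * b) ∘ₗ μ) := by
      rw [conv_assoc]
      congr 1
      rw [conv_mulLeft, ← conv_assoc, hμγ, one_conv, LinearMap.mulLeft_mul,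
        LinearMap.comp_assoc]
    have e1 : actL k A H γ μ (h ⊗ₜ (a * b)) =
        conv k γ (LinearMap.mulLeft k (a * b) ∘ₗ μ) h := by
      simpa using LinearMap.congr_fun (actL_flip γ μ (a * b)) h
    rw [e1, ← hconvrhs, ← actL_flip γ μ a, ← actL_flip γ μ b]
    have e2 := LinearMap.congr_fun key2 (Coalgebra.comul (R := k) h)
    simpa [conv] using e2.symm
  -- Part 1 : actL lands in S
  refine ⟨?_, fun h a b _ _ => part2 h a b, part3⟩
  intro h b hb
  set ι : A →ₗ[k] A ⊗[k] H := (TensorProduct.mk k A H).flip 1 with hι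
  set j : H →ₗ[k] A ⊗[k] H := TensorProduct.mk k A H 1 with hj
  have ιmul : ∀ x y : A, ι (x * y) = ι x * ι y := by
    intro x y; simp [hι, Algebra.TensorProduct.tmul_mul_tmul]
  have ιone : ι 1 = 1 := rfl
  have jmul : ∀ x y : H, j (x * y) = j x * j y := by
    intro x y; simp [hj, Algebra.TensorProduct.tmul_mul_tmul]
  have jone : j 1 = 1 := rfl
  have hG : ρ ∘ₗ γ = conv k (ι ∘ₗ γ) j := by
    have h1 : ρ ∘ₗ γ = (γ.rTensor H) ∘ₗ Coalgebra.comul := by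
      ext l; exact hγcolin l
    have h2 : LinearMap.mul' k (A ⊗[k] H) ∘ₗ TensorProduct.map (ι ∘ₗ γ) j =
        γ.rTensor H := by
      apply TensorProduct.ext'
      intro g l
      simp [hι, hj, Algebra.TensorProduct.tmul_mul_tmul]
    rw [h1, conv, ← h2, LinearMap.comp_assoc]
  set S' : H →ₗ[k] H := HopfAlgebra.antipode (R := k) with hS'
  have hidS : conv k (LinearMap.id : H →ₗ[k] H) S' = convOne k H H :=
    HopfAlgebra.mul_antipode_lTensor_comul
  have hjS : conv k j (j ∘ₗ S') = convOne k H (A ⊗[k] H) := by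
    have h1 := comp_conv j jmul LinearMap.id S'
    rw [hidS, comp_convOne j jone] at h1
    simpa using h1.symm
  have hιinv : conv k (ι ∘ₗ γ) (ι ∘ₗ μ) = convOne k H (A ⊗[k] H) := by
    rw [← comp_conv ι ιmul, hγμ, comp_convOne ι ιone]
  have ρmul : ∀ x y : A, ρ (x * y) = ρ x * ρ y := hA.mul
  have hρinv2 : conv k (ρ ∘ₗ μ) (ρ ∘ₗ γ) = convOne k H (A ⊗[k] H) := by
    rw [← comp_conv ρ ρmul, hμγ, comp_convOne ρ hA.one]
  have hGF : conv k (conv k (ι ∘ₗ γ) j) (conv k (j ∘ₗ S') (ι ∘ₗ μ)) =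
      convOne k H (A ⊗[k] H) := by
    rw [conv_assoc, ← conv_assoc j, hjS, one_conv, hιinv]
  have hμeq : ρ ∘ₗ μ = conv k (j ∘ₗ S') (ι ∘ₗ μ) := by
    refine conv_inv_unique (f := ρ ∘ₗ γ) ?_ hρinv2
    rw [hG]; exact hGF
  have hρb : ρ b = b ⊗ₜ (1 : H) := (hS b).mp hb
  set x : A ⊗[k] H := b ⊗ₜ 1 with hx
  have hcomm1 : LinearMap.mulLeft k x ∘ₗ (j ∘ₗ S') = LinearMap.mulRight k x ∘ₗ (j ∘ₗ S') := by
    ext l; simp [hx, hj, Algebra.TensorProduct.tmul_mul_tmul]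
  have hcomm2 : LinearMap.mulLeft k x ∘ₗ ι = ι ∘ₗ LinearMap.mulLeft k b := by
    ext y; simp [hx, hι, Algebra.TensorProduct.tmul_mul_tmul]
  have hρmulLeft : ρ ∘ₗ (LinearMap.mulLeft k b ∘ₗ μ) = LinearMap.mulLeft k x ∘ₗ (ρ ∘ₗ μ) := by
    ext l; simp [hx, ρmul, hρb]
  have main : ρ ∘ₗ conv k γ (LinearMap.mulLeft k b ∘ₗ μ) =
      ι ∘ₗ conv k γ (LinearMap.mulLeft k b ∘ₗ μ) := by
    rw [comp_conv ρ ρmul, comp_conv ι ιmul, hρmulLeft, hμeq, hG,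
      ← conv_mulLeft, hcomm1, conv_assoc, ← conv_assoc j, conv_mulRight, hjS,
      mulRight_convOne, conv_mulLeft, one_conv,
      ← LinearMap.comp_assoc, hcomm2, LinearMap.comp_assoc]
  rw [hS]
  have hflip : actL k A H γ μ (h ⊗ₜ b) = conv k γ (LinearMap.mulLeft k b ∘ₗ μ) h := by
    simpa using LinearMap.congr_fun (actL_flip γ μ b) h
  have hmain := LinearMap.congr_fun main h
  rw [hflip]
  simpa [hι] using hmain


end CrossedGalois
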